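/- Let f be a continuous function on the unit circle bΔ satisfying: for every polynomial P such that f + P is nonvanishing on bΔ, the winding number of f + P around 0 is nonnegative. Then for every w ∈ ℂ with |w| > 1, the function z ↦ f(z)/(z − w) on bΔ also satisfies the same condition: for every polynomial P with f(z)/(z−w) + P(z) nonvanishing on bΔ, the winding number of z ↦ f(z)/(z−w) + P(z) around 0 is nonnegative. -/

import Mathlib

open Polynomial Metric
open scoped Classical

/-- `g` (restricted to the unit circle) has winding number `n` around `0`:
there is a continuous argument lift `α` along `θ ↦ g (exp (iθ))` whose total
increase over `[0, 2π]` is `2πn`. -/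
def HasWindingNumber (g : ℂ → ℂ) (n : ℤ) : Prop :=
  ∃ α : ℝ → ℝ, Continuous α ∧
    (∀ θ : ℝ, g (Complex.exp (θ * Complex.I)) =
      (‖g (Complex.exp (θ * Complex.I))‖ : ℂ) * Complex.exp (α θ * Complex.I)) ∧
    α (2 * Real.pi) - α 0 = n * (2 * Real.pi)

/-- `f` on the unit circle extends continuously to the closed unit disc,
holomorphically on the open unit disc. -/
def ExtendsHolo (f : ℂ → ℂ) : Prop :=
  ∃ F : ℂ → ℂ, ContinuousOn F (closedBall 0 1) ∧
    DifferentiableOn ℂ F (ball 0 1) ∧ ∀ z ∈ sphere (0:ℂ) 1, F z = f z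

/-- Multiplicity of a zero of a (holomorphic) function: least `n` with
nonvanishing `n`-th derivative. -/
noncomputable def holoOrder (f : ℂ → ℂ) (z : ℂ) : ℕ :=
  sInf {n | iteratedDeriv n f z ≠ 0}

/-! The winding number is additive under products, so multiplying by `z - w`, which has
winding number `0` when `|w| > 1`, does not change it. Since `f / (z - w) + P` times `z - w`
is `f + P * (X - w)`, the hypothesis on `f` applies to the latter. -/

theorem Complex.exp_ofReal_mul_I_mem_sphere (θ : ℝ) :
    Complex.exp (θ * Complex.I) ∈ sphere (0 : ℂ) 1 := by
  simp [Complex.norm_exp_ofReal_mul_I]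

namespace HasWindingNumber

open Complex

theorem congr {g h : ℂ → ℂ} {n : ℤ} (hg : HasWindingNumber g n)
    (hgh : ∀ z ∈ sphere (0 : ℂ) 1, g z = h z) : HasWindingNumber h n := by
  obtain ⟨α, hαc, hα, hαn⟩ := hg
  refine ⟨α, hαc, fun θ => ?_, hαn⟩
  rw [← hgh _ (exp_ofReal_mul_I_mem_sphere θ)]
  exact hα θ

theorem mul {g h : ℂ → ℂ} {m n : ℤ} (hg : HasWindingNumber g m)
    (hh : HasWindingNumber h n) : HasWindingNumber (g * h) (m + n) := by
  obtain ⟨α, hαc, hα, hαm⟩ := hg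
  obtain ⟨β, hβc, hβ, hβn⟩ := hh
  refine ⟨α + β, hαc.add hβc, fun θ => ?_, ?_⟩
  · simp only [Pi.mul_apply, Pi.add_apply, norm_mul, ofReal_add, ofReal_mul, add_mul, exp_add]
    rw [hα θ, hβ θ]
    simp only [norm_mul, norm_exp_ofReal_mul_I, mul_one, Complex.norm_real, Real.norm_eq_abs,
      abs_norm]
    ring
  · simp only [Pi.add_apply, Int.cast_add]
    linarith

theorem const (c : ℂ) : HasWindingNumber (fun _ => c) 0 :=
  ⟨fun _ => arg c, continuous_const, fun _ => (norm_mul_exp_arg_mul_I c).symm, by simp⟩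

/-- A loop staying in the slit plane has `arg` as a continuous lift, which closes up. -/
theorem zero_of_mapsTo_slitPlane {g : ℂ → ℂ} (hg : ContinuousOn g (sphere (0 : ℂ) 1))
    (hslit : ∀ z ∈ sphere (0 : ℂ) 1, g z ∈ slitPlane) : HasWindingNumber g 0 := by
  refine ⟨fun θ => arg (g (exp (θ * I))), ?_, fun θ => (norm_mul_exp_arg_mul_I _).symm, ?_⟩
  · refine continuous_iff_continuousAt.mpr fun θ => ?_
    have hloop : Continuous fun θ : ℝ => g (exp (θ * I)) :=
      hg.comp_continuous (by fun_prop) exp_ofReal_mul_I_mem_sphere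
    exact (continuousAt_arg (hslit _ (exp_ofReal_mul_I_mem_sphere θ))).comp
      (f := fun θ : ℝ => g (exp (θ * I))) hloop.continuousAt
  · have hperiod : exp (((2 * Real.pi : ℝ) : ℂ) * I) = exp (((0 : ℝ) : ℂ) * I) := by
      push_cast
      rw [exp_two_pi_mul_I, zero_mul, exp_zero]
    simp only [hperiod, sub_self, Int.cast_zero, zero_mul]

theorem sub_of_one_lt_norm {w : ℂ} (hw : 1 < ‖w‖) : HasWindingNumber (fun z => z - w) 0 := by
  have hw0 : w ≠ 0 := norm_pos_iff.mp (one_pos.trans hw)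
  have hslit : ∀ z ∈ sphere (0 : ℂ) 1, 1 - z / w ∈ slitPlane := by
    intro z hz
    have hzw : ‖z / w‖ < 1 := by
      rw [norm_div, mem_sphere_zero_iff_norm.mp hz, div_lt_one (one_pos.trans hw)]
      exact hw
    refine mem_slitPlane_iff.mpr (Or.inl ?_)
    simp only [sub_re, one_re]
    linarith [re_le_norm (z / w)]
  have hfactor : (fun _ => -w) * (fun z => 1 - z / w) = fun z => z - w := by
    funext z
    simp only [Pi.mul_apply]
    field_simp
    ring
  simpa [hfactor] using
    (const (-w)).mul (zero_of_mapsTo_slitPlane (by fun_prop) hslit)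

end HasWindingNumber

theorem stmt3_general (f : ℂ → ℂ)
    (h : ∀ P : Polynomial ℂ, (∀ z ∈ sphere (0:ℂ) 1, f z + P.eval z ≠ 0) →
      ∀ n : ℤ, HasWindingNumber (fun z => f z + P.eval z) n → 0 ≤ n) :
    ∀ w : ℂ, 1 < ‖w‖ →
      ∀ P : Polynomial ℂ, (∀ z ∈ sphere (0:ℂ) 1, f z / (z - w) + P.eval z ≠ 0) →
        ∀ n : ℤ, HasWindingNumber (fun z => f z / (z - w) + P.eval z) n → 0 ≤ n := by
  intro w hw P hP n hn
  have hzw : ∀ z ∈ sphere (0:ℂ) 1, z - w ≠ 0 := fun z hz hzw => by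
    rw [sub_eq_zero.mp hzw, mem_sphere_zero_iff_norm] at hz
    exact hw.ne' hz
  have hfactor : ∀ z ∈ sphere (0:ℂ) 1,
      (z - w) * (f z / (z - w) + P.eval z) = f z + (P * (X - C w)).eval z := by
    intro z hz
    rw [eval_mul, eval_sub, eval_X, eval_C, mul_add, mul_div_cancel₀ _ (hzw z hz), mul_comm]
  refine h (P * (X - C w)) (fun z hz => ?_) n ?_
  · rw [← hfactor z hz]
    exact mul_ne_zero (hzw z hz) (hP z hz)
  · simpa using ((HasWindingNumber.sub_of_one_lt_norm hw).mul hn).congr hfactor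

theorem stmt3 (f : ℂ → ℂ) (hf : ContinuousOn f (sphere (0:ℂ) 1))
    (h : ∀ P : Polynomial ℂ, (∀ z ∈ sphere (0:ℂ) 1, f z + P.eval z ≠ 0) →
      ∀ n : ℤ, HasWindingNumber (fun z => f z + P.eval z) n → 0 ≤ n) :
    ∀ w : ℂ, 1 < ‖w‖ →
      ∀ P : Polynomial ℂ, (∀ z ∈ sphere (0:ℂ) 1, f z / (z - w) + P.eval z ≠ 0) →
        ∀ n : ℤ, HasWindingNumber (fun z => f z / (z - w) + P.eval z) n → 0 ≤ n :=
  stmt3_general f h
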